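/- arXiv:2306.05649 — 5 statements merged into one kernel-verified Lean document; each statement's English description precedes it below -/
import Mathlib

section
/- Let f : ℝ → ℝ be non-increasing, let x̃ ∈ ℝ^d, θ ∈ ℝ^d, y ∈ ℝ, and ρ > 0. Then the supremum of f(xᵀθ − y) over the Euclidean ball {x ∈ ℝ^d : ‖x − x̃‖₂ ≤ ρ} equals f(x̃ᵀθ − y − ρ‖θ‖₂), and this supremum is attained. -/
open RealInnerProductSpace

/-!
Cauchy–Schwarz bounds `⟪x, θ⟫` below by `⟪xt, θ⟫ - ρ‖θ‖` on the ball, with equality at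
`xt - (ρ / ‖θ‖) • θ`; a non-increasing `f` turns this minimum into the maximum of the loss.
-/

theorem norm_div_norm_smul_self_le {E : Type*} [NormedAddCommGroup E] [NormedSpace ℝ E]
    (θ : E) {ρ : ℝ} (hρ : 0 ≤ ρ) : ‖(ρ / ‖θ‖) • θ‖ ≤ ρ := by
  rcases eq_or_ne θ 0 with rfl | hθ
  · simpa using hρ
  · rw [norm_smul, Real.norm_of_nonneg (by positivity), div_mul_cancel₀ ρ (norm_ne_zero_iff.2 hθ)]

theorem isLeast_inner_image_closedBall {E : Type*} [NormedAddCommGroup E]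
    [InnerProductSpace ℝ E] (c θ : E) {ρ : ℝ} (hρ : 0 ≤ ρ) :
    IsLeast ((fun x => ⟪x, θ⟫) '' Metric.closedBall c ρ) (⟪c, θ⟫ - ρ * ‖θ‖) := by
  refine ⟨⟨c - (ρ / ‖θ‖) • θ, ?_, ?_⟩, ?_⟩
  · rw [mem_closedBall_iff_norm', sub_sub_cancel]
    exact norm_div_norm_smul_self_le θ hρ
  · -- for `θ = 0` both sides are `⟪c, 0⟫`, since `ρ / 0 = 0`
    rcases eq_or_ne θ 0 with rfl | hθ
    · simp
    · simp only [inner_sub_left, real_inner_smul_left, real_inner_self_eq_norm_sq]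
      field_simp
  · rintro _ ⟨x, hx, rfl⟩
    have hcx : ⟪c - x, θ⟫ ≤ ρ * ‖θ‖ :=
      calc ⟪c - x, θ⟫ ≤ ‖c - x‖ * ‖θ‖ := real_inner_le_norm _ _
        _ ≤ ρ * ‖θ‖ := by
          gcongr
          rwa [← dist_eq_norm, dist_comm]
    rw [inner_sub_left] at hcx
    linarith

/-- If `f : ℝ → ℝ` is non-increasing, then the supremum of `f (xᵀθ - y)` over the
Euclidean ball of radius `ρ > 0` centered at `xt` equals `f (xtᵀθ - y - ρ‖θ‖)`,
and this supremum is attained. -/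
theorem sup_nonincreasing_loss_ball {d : ℕ} (f : ℝ → ℝ)
    (hf : ∀ a b : ℝ, a ≤ b → f b ≤ f a)
    (xt θ : EuclideanSpace ℝ (Fin d)) (y ρ : ℝ) (hρ : 0 < ρ) :
    sSup ((fun x => f (⟪x, θ⟫ - y)) '' Metric.closedBall xt ρ)
        = f (⟪xt, θ⟫ - y - ρ * ‖θ‖) ∧
      IsGreatest ((fun x => f (⟪x, θ⟫ - y)) '' Metric.closedBall xt ρ)
        (f (⟪xt, θ⟫ - y - ρ * ‖θ‖)) := by
  have hanti : Antitone fun t => f (t - y) := fun a b hab => hf _ _ (sub_le_sub_right hab y)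
  have hmax := hanti.map_isLeast (isLeast_inner_image_closedBall xt θ hρ.le)
  rw [Set.image_image, sub_right_comm] at hmax
  exact ⟨hmax.csSup_eq, hmax⟩
end

section
/- Let f : ℝ → ℝ satisfy f(z) = f(|z|) for all z ∈ ℝ and be non-decreasing on ℝ₊ (i.e., 0 ≤ a ≤ b implies f(a) ≤ f(b)). Let x̃ ∈ ℝ^d, θ ∈ ℝ^d, y ∈ ℝ, and ρ > 0. Then the supremum of f(xᵀθ − y) over the Euclidean ball {x ∈ ℝ^d : ‖x − x̃‖₂ ≤ ρ} equals f(|x̃ᵀθ − y| + ρ‖θ‖₂), and this supremum is attained. -/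
/-!
Along the ball `‖x - xt‖ ≤ ρ` the linear form `⟪x, θ⟫` sweeps out exactly the interval of radius
`ρ‖θ‖` around `⟪xt, θ⟫` (Cauchy–Schwarz for the bound, `xt + t • θ` for the values). On that
interval `|s - y|` is largest, with value `|⟪xt, θ⟫ - y| + ρ‖θ‖`, at one of the endpoints, and a
loss that is even and non-decreasing on `ℝ₊` is a non-decreasing function of `|s - y|`.
-/

open Set Metric RealInnerProductSpace

section InnerProductSpace

variable {E : Type*} [NormedAddCommGroup E] [InnerProductSpace ℝ E]

theorem image_inner_closedBall (xt θ : E) {ρ : ℝ} (hρ : 0 ≤ ρ) :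
    (fun x => ⟪x, θ⟫) '' closedBall xt ρ = Icc (⟪xt, θ⟫ - ρ * ‖θ‖) (⟪xt, θ⟫ + ρ * ‖θ‖) := by
  ext s
  constructor
  · rintro ⟨x, hx, rfl⟩
    have hbound : |⟪x, θ⟫ - ⟪xt, θ⟫| ≤ ρ * ‖θ‖ := by
      rw [← inner_sub_left]
      exact (abs_real_inner_le_norm _ _).trans
        (mul_le_mul_of_nonneg_right (mem_closedBall_iff_norm.mp hx) (norm_nonneg θ))
    obtain ⟨hlo, hhi⟩ := abs_le.mp hbound
    constructor <;> linarith
  · rintro ⟨hlo, hhi⟩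
    by_cases hθ : θ = 0
    · subst hθ
      refine ⟨xt, mem_closedBall_self hρ, ?_⟩
      simp only [inner_zero_right, norm_zero, mul_zero, sub_zero, add_zero] at hlo hhi ⊢
      linarith
    · have hθn : 0 < ‖θ‖ := norm_pos_iff.mpr hθ
      set t := s - ⟪xt, θ⟫
      have ht : |t| ≤ ρ * ‖θ‖ := abs_le.mpr ⟨by linarith, by linarith⟩
      refine ⟨xt + (t / ‖θ‖ ^ 2) • θ, ?_, ?_⟩
      · rw [mem_closedBall_iff_norm, add_sub_cancel_left, norm_smul, Real.norm_eq_abs, abs_div,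
          abs_of_nonneg (sq_nonneg ‖θ‖)]
        calc |t| / ‖θ‖ ^ 2 * ‖θ‖ = |t| / ‖θ‖ := by field_simp
          _ ≤ ρ := (div_le_iff₀ hθn).mpr ht
      · simp only [inner_add_left, real_inner_smul_left, real_inner_self_eq_norm_sq]
        field_simp
        ring

end InnerProductSpace

theorem isGreatest_image_Icc_of_even_monotoneOn {f : ℝ → ℝ} (hf_abs : ∀ z, f z = f |z|)
    (hf_mono : MonotoneOn f (Ici 0)) (c y : ℝ) {r : ℝ} (hr : 0 ≤ r) :
    IsGreatest ((fun s => f (s - y)) '' Icc (c - r) (c + r)) (f (|c - y| + r)) := by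
  refine ⟨?_, ?_⟩
  · rcases le_total 0 (c - y) with hc | hc
    · refine ⟨c + r, ⟨by linarith, le_rfl⟩, ?_⟩
      show f (c + r - y) = _
      rw [abs_of_nonneg hc, add_sub_right_comm]
    · refine ⟨c - r, ⟨le_rfl, by linarith⟩, ?_⟩
      show f (c - r - y) = _
      rw [hf_abs (c - r - y), abs_of_nonpos (by linarith : c - r - y ≤ 0), abs_of_nonpos hc]
      congr 1
      ring
  · rintro _ ⟨s, ⟨hlo, hhi⟩, rfl⟩
    have hs : |s - y| ≤ |c - y| + r := by
      rw [abs_le]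
      constructor <;> linarith [neg_abs_le (c - y), le_abs_self (c - y)]
    show f (s - y) ≤ _
    rw [hf_abs (s - y)]
    exact hf_mono (mem_Ici.mpr (abs_nonneg _)) (mem_Ici.mpr ((abs_nonneg _).trans hs)) hs

/-- If `f : ℝ → ℝ` satisfies `f z = f |z|` and is non-decreasing on `ℝ₊`, then the
supremum of `f (xᵀθ - y)` over the Euclidean ball of radius `ρ > 0` centered at `xt`
equals `f (|xtᵀθ - y| + ρ‖θ‖)`, and this supremum is attained. -/
theorem sup_abs_nondecreasing_loss_ball {d : ℕ} (f : ℝ → ℝ)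
    (hf_abs : ∀ z : ℝ, f z = f |z|)
    (hf_mono : ∀ a b : ℝ, 0 ≤ a → a ≤ b → f a ≤ f b)
    (xt θ : EuclideanSpace ℝ (Fin d)) (y ρ : ℝ) (hρ : 0 < ρ) :
    sSup ((fun x => f (⟪x, θ⟫ - y)) '' Metric.closedBall xt ρ)
        = f (|⟪xt, θ⟫ - y| + ρ * ‖θ‖) ∧
      IsGreatest ((fun x => f (⟪x, θ⟫ - y)) '' Metric.closedBall xt ρ)
        (f (|⟪xt, θ⟫ - y| + ρ * ‖θ‖)) := by
  have hgreatest : IsGreatest ((fun x => f (⟪x, θ⟫ - y)) '' Metric.closedBall xt ρ)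
      (f (|⟪xt, θ⟫ - y| + ρ * ‖θ‖)) := by
    rw [← image_image (fun s => f (s - y)) (fun x => ⟪x, θ⟫), image_inner_closedBall xt θ hρ.le]
    exact isGreatest_image_Icc_of_even_monotoneOn hf_abs
      (fun a ha b _ hab => hf_mono a b ha hab) _ y (by positivity)
  exact ⟨hgreatest.csSup_eq, hgreatest⟩
end

section
/- Let X ⊆ ℝ^d be nonempty and compact, let f : ℝ → ℝ be non-increasing, and let θ ∈ ℝ^d, y ∈ ℝ, c ∈ ℝ. Then sup_{x ∈ X} f(xᵀθ − y) ≤ c if and only if there exists z ∈ ℝ such that S_X(−θ) + y ≤ −z and f(z) ≤ c, where S_X is the support function of X. -/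
/-!
A minimiser `x₀` of `⟪·, θ⟫` on the compact set `X` maximises both `f (⟪x, θ⟫ - y)` (as `f` is
non-increasing) and `⟪x, -θ⟫`, so both suprema are attained at `x₀`. The claim then reduces to
`f a ≤ c ↔ ∃ z ≤ a, f z ≤ c` for `a = ⟪x₀, θ⟫ - y`, which holds for every non-increasing `f`.
-/

open RealInnerProductSpace

theorem IsMaxOn.csSup_image_eq {α β : Type*} [ConditionallyCompleteLattice β] {f : α → β}
    {s : Set α} {a : α} (ha : a ∈ s) (h : IsMaxOn f s a) : sSup (f '' s) = f a :=
  (h.isLUB ha).csSup_eq ⟨f a, Set.mem_image_of_mem f ha⟩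

theorem Antitone.apply_le_iff_exists_le {α β : Type*} [Preorder α] [Preorder β] {f : α → β}
    (hf : Antitone f) {a : α} {c : β} : f a ≤ c ↔ ∃ z ≤ a, f z ≤ c :=
  ⟨fun h => ⟨a, le_rfl, h⟩, fun ⟨_, hza, hz⟩ => (hf hza).trans hz⟩

/-- For `X ⊆ ℝ^d` nonempty compact and `f` non-increasing,
`sup_{x ∈ X} f (xᵀθ - y) ≤ c` iff there exists `z` with `S_X(-θ) + y ≤ -z` and
`f z ≤ c`, where `S_X(θ) = sup_{x ∈ X} xᵀθ`. -/
theorem robust_constraint_nonincreasing_iff {d : ℕ} (X : Set (EuclideanSpace ℝ (Fin d)))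
    (hX : X.Nonempty) (hXc : IsCompact X) (f : ℝ → ℝ)
    (hf : ∀ a b : ℝ, a ≤ b → f b ≤ f a)
    (θ : EuclideanSpace ℝ (Fin d)) (y c : ℝ) :
    sSup ((fun x => f (⟪x, θ⟫ - y)) '' X) ≤ c ↔
      ∃ z : ℝ, sSup ((fun x => ⟪x, -θ⟫) '' X) + y ≤ -z ∧ f z ≤ c := by
  have hf_anti : Antitone f := fun a b => hf a b
  obtain ⟨x₀, hx₀X, hx₀⟩ :=
    hXc.exists_isMinOn hX (f := fun x => ⟪x, θ⟫) (continuousOn_id.inner continuousOn_const)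
  have hsup_f : sSup ((fun x => f (⟪x, θ⟫ - y)) '' X) = f (⟪x₀, θ⟫ - y) :=
    (hx₀.comp_antitone (hf_anti.comp_monotone fun _ _ h => sub_le_sub_right h y)).csSup_image_eq
      hx₀X
  have hsupport : sSup ((fun x => ⟪x, -θ⟫) '' X) = -⟪x₀, θ⟫ := by
    simpa only [inner_neg_right] using hx₀.neg.csSup_image_eq hx₀X
  rw [hsup_f, hsupport, hf_anti.apply_le_iff_exists_le]
  refine exists_congr fun z => and_congr_left' ?_
  constructor <;> intro <;> linarith
end

section
/- Let X ⊆ ℝ^d be nonempty and compact, let f : ℝ → ℝ satisfy f(z) = f(|z|) for all z ∈ ℝ and be non-decreasing on ℝ₊, and let θ ∈ ℝ^d, y ∈ ℝ, c ∈ ℝ. Then sup_{x ∈ X} f(xᵀθ − y) ≤ c if and only if there exists z ∈ ℝ such that S_X(θ) − y ≤ z, S_X(−θ) + y ≤ z, and f(z) ≤ c, where S_X is the support function of X. -/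
/-!
The values `xᵀθ`, `x ∈ X`, fill out a compact set of reals with least element `a = -S_X(-θ)` and
greatest element `b = S_X(θ)`. Since `f` only sees `|xᵀθ - y|` and grows with it, the supremum of
`f (xᵀθ - y)` is attained at `x` realizing `a` or `b` and equals `f (max |a - y| |b - y|)`, and
`max |a - y| |b - y|` is the least `z` with `b - y ≤ z` and `y - a ≤ z`.
-/

open RealInnerProductSpace Set

theorem apply_le_apply_of_abs_le {f : ℝ → ℝ} (hf_abs : ∀ z, f z = f |z|)
    (hf_mono : MonotoneOn f (Ici 0)) {a b : ℝ} (h : |a| ≤ |b|) : f a ≤ f b := by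
  rw [hf_abs a, hf_abs b]
  exact hf_mono (abs_nonneg a) (abs_nonneg b) h

theorem IsCompact.isGreatest_image_apply_sub {f : ℝ → ℝ} (hf_abs : ∀ z, f z = f |z|)
    (hf_mono : MonotoneOn f (Ici 0)) {s : Set ℝ} (hs : IsCompact s) (hne : s.Nonempty) (y : ℝ) :
    IsGreatest ((fun t => f (t - y)) '' s) (f (max |sInf s - y| |sSup s - y|)) := by
  constructor
  · rcases max_choice |sInf s - y| |sSup s - y| with h | h <;> rw [h, ← hf_abs]
    · exact mem_image_of_mem _ (hs.sInf_mem hne)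
    · exact mem_image_of_mem _ (hs.sSup_mem hne)
  · rintro _ ⟨t, ht, rfl⟩
    refine apply_le_apply_of_abs_le hf_abs hf_mono (le_trans ?_ (le_abs_self _))
    exact abs_le_max_abs_abs (sub_le_sub_right (csInf_le hs.bddBelow ht) y)
      (sub_le_sub_right (le_csSup hs.bddAbove ht) y)

theorem apply_max_abs_sub_le_iff_exists {f : ℝ → ℝ} (hf_abs : ∀ z, f z = f |z|)
    (hf_mono : MonotoneOn f (Ici 0)) {a b : ℝ} (hab : a ≤ b) (y c : ℝ) :
    f (max |a - y| |b - y|) ≤ c ↔ ∃ z, b - y ≤ z ∧ y - a ≤ z ∧ f z ≤ c := by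
  constructor
  · intro h
    exact ⟨_, (le_abs_self _).trans (le_max_right _ _),
      ((le_abs_self _).trans_eq (abs_sub_comm _ _)).trans (le_max_left _ _), h⟩
  · rintro ⟨z, hbz, haz, hfz⟩
    have hmax : max |a - y| |b - y| ≤ z :=
      max_le (abs_le.2 ⟨by linarith, by linarith⟩) (abs_le.2 ⟨by linarith, by linarith⟩)
    refine le_trans (apply_le_apply_of_abs_le hf_abs hf_mono ?_) hfz
    rw [abs_of_nonneg (le_max_of_le_left (abs_nonneg _))]
    exact hmax.trans (le_abs_self z)

theorem sSup_image_neg_eq_neg_sInf {α : Type*} (g : α → ℝ) (X : Set α) :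
    sSup ((fun x => -g x) '' X) = -sInf (g '' X) := by
  rw [← Real.sSup_neg, ← image_neg_eq_neg, image_image]

/-- For `X ⊆ ℝ^d` nonempty compact and `f` with `f z = f |z|`, non-decreasing on `ℝ₊`,
`sup_{x ∈ X} f (xᵀθ - y) ≤ c` iff there exists `z` with `S_X(θ) - y ≤ z`,
`S_X(-θ) + y ≤ z`, and `f z ≤ c`, where `S_X(θ) = sup_{x ∈ X} xᵀθ`. -/
theorem robust_constraint_abs_nondecreasing_iff {d : ℕ} (X : Set (EuclideanSpace ℝ (Fin d)))
    (hX : X.Nonempty) (hXc : IsCompact X) (f : ℝ → ℝ)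
    (hf_abs : ∀ z : ℝ, f z = f |z|)
    (hf_mono : ∀ a b : ℝ, 0 ≤ a → a ≤ b → f a ≤ f b)
    (θ : EuclideanSpace ℝ (Fin d)) (y c : ℝ) :
    sSup ((fun x => f (⟪x, θ⟫ - y)) '' X) ≤ c ↔
      ∃ z : ℝ, sSup ((fun x => ⟪x, θ⟫) '' X) - y ≤ z ∧
        sSup ((fun x => ⟪x, -θ⟫) '' X) + y ≤ z ∧ f z ≤ c := by
  have hf_mono' : MonotoneOn f (Ici 0) := fun a ha _ _ hab => hf_mono _ _ ha hab
  have hs : IsCompact ((fun x => ⟪x, θ⟫) '' X) :=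
    hXc.image (continuous_id.inner continuous_const)
  have hne : ((fun x => ⟪x, θ⟫) '' X).Nonempty := hX.image _
  have hcomp : (fun x => f (⟪x, θ⟫ - y)) '' X
      = (fun t => f (t - y)) '' ((fun x => ⟪x, θ⟫) '' X) := by
    rw [image_image]
  simp only [inner_neg_right]
  rw [hcomp, (hs.isGreatest_image_apply_sub hf_abs hf_mono' hne y).csSup_eq,
    sSup_image_neg_eq_neg_sInf, neg_add_eq_sub,
    apply_max_abs_sub_le_iff_exists hf_abs hf_mono' (csInf_le_csSup hne hs.bddBelow hs.bddAbove)]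
end

section
/- Let Θ ⊆ ℝ^d be nonempty, let X₁, …, Xₙ ⊆ ℝ^d be nonempty compact sets, let y ∈ ℝⁿ, and let f : ℝ → ℝ satisfy f(z) = f(|z|) for all z ∈ ℝ and be non-decreasing on ℝ₊. Then the optimal value of the robust ERM problem: minimize Σ_{i=1}^n sup_{x_i ∈ X_i} f(x_iᵀθ − y_i) over θ ∈ Θ, equals the optimal value of the problem: minimize Σ_{i=1}^n f(z_i) over (θ, z) ∈ Θ × ℝⁿ subject to S_{X_i}(θ) − y_i ≤ z_i and S_{X_i}(−θ) + y_i ≤ z_i for i = 1, …, n, where S_{X_i} is the support function of X_i. -/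
/-!
Since `f` is even and non-decreasing on `ℝ₊`, the robust loss `sup_{x ∈ Xᵢ} f (xᵀθ - yᵢ)` is
`f` of the largest absolute residual `max_{x ∈ Xᵢ} |xᵀθ - yᵢ|`. On a compact set this maximum is
attained and equals `cᵢ(θ) = max (S_{Xᵢ}(θ) - yᵢ, S_{Xᵢ}(-θ) + yᵢ) ≥ 0`. Hence `(θ, c(θ))` is
feasible for the reformulation with the same objective, while any feasible `(θ, z)` has
`zᵢ ≥ cᵢ(θ)` and so an objective at least as large.
-/

open RealInnerProductSpace Set

theorem isGreatest_abs_sub_image {α : Type*} [TopologicalSpace α] {K : Set α}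
    (hK : IsCompact K) (hne : K.Nonempty) {g : α → ℝ} (hg : ContinuousOn g K) (c : ℝ) :
    IsGreatest ((fun x => |g x - c|) '' K)
      (max (sSup (g '' K) - c) (sSup ((fun x => -g x) '' K) + c)) := by
  obtain ⟨x₁, hx₁, hsup₁, hle₁⟩ := hK.exists_sSup_image_eq_and_ge hne hg
  obtain ⟨x₂, hx₂, hsup₂, hle₂⟩ :=
    hK.exists_sSup_image_eq_and_ge hne (f := fun x => -g x) hg.neg
  rw [hsup₁, hsup₂]
  refine ⟨?_, ?_⟩
  · rcases le_total (-g x₂ + c) (g x₁ - c) with h | h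
    · refine ⟨x₁, hx₁, ?_⟩
      have := hle₂ x₁ hx₁
      dsimp only
      rw [max_eq_left h, abs_of_nonneg (by linarith)]
    · refine ⟨x₂, hx₂, ?_⟩
      have := hle₁ x₂ hx₂
      dsimp only
      rw [max_eq_right h, abs_of_nonpos (by linarith), neg_sub, sub_eq_neg_add]
  · rintro _ ⟨x, hx, rfl⟩
    have := hle₁ x hx
    have := hle₂ x hx
    exact abs_le.2 ⟨by linarith [le_max_right (g x₁ - c) (-g x₂ + c)],
      by linarith [le_max_left (g x₁ - c) (-g x₂ + c)]⟩

theorem sSup_image_comp_eq_of_isGreatest_abs {α : Type*} {f : ℝ → ℝ}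
    (hf_abs : ∀ z, f z = f |z|) (hf_mono : MonotoneOn f (Ici 0)) {g : α → ℝ} {K : Set α}
    {M : ℝ} (hM : IsGreatest ((fun x => |g x|) '' K) M) :
    sSup ((fun x => f (g x)) '' K) = f M := by
  have himage : (fun x => f (g x)) '' K = f '' ((fun x => |g x|) '' K) := by
    rw [image_image]
    exact image_congr fun x _ => hf_abs (g x)
  rw [himage]
  have hnonneg : (fun x => |g x|) '' K ⊆ Ici 0 := image_subset_iff.2 fun x _ => abs_nonneg (g x)
  exact ((hf_mono.mono hnonneg).map_isGreatest hM).csSup_eq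

theorem rerm_reformulation_abs_nondecreasing_general {d n : ℕ}
    (Θ : Set (EuclideanSpace ℝ (Fin d)))
    (X : Fin n → Set (EuclideanSpace ℝ (Fin d)))
    (hX : ∀ i, (X i).Nonempty) (hXc : ∀ i, IsCompact (X i))
    (y : Fin n → ℝ) (f : ℝ → ℝ)
    (hf_abs : ∀ z : ℝ, f z = f |z|)
    (hf_mono : ∀ a b : ℝ, 0 ≤ a → a ≤ b → f a ≤ f b) :
    sInf ((fun θ => ∑ i, sSup ((fun x => f (⟪x, θ⟫ - y i)) '' X i)) '' Θ)
      = sInf {v : ℝ | ∃ θ ∈ Θ, ∃ z : Fin n → ℝ,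
          (∀ i, sSup ((fun x => ⟪x, θ⟫) '' X i) - y i ≤ z i) ∧
          (∀ i, sSup ((fun x => ⟪x, -θ⟫) '' X i) + y i ≤ z i) ∧
          v = ∑ i, f (z i)} := by
  set c : EuclideanSpace ℝ (Fin d) → Fin n → ℝ := fun θ i =>
    max (sSup ((fun x => ⟪x, θ⟫) '' X i) - y i) (sSup ((fun x => ⟪x, -θ⟫) '' X i) + y i)
  have hc : ∀ θ i, IsGreatest ((fun x => |⟪x, θ⟫ - y i|) '' X i) (c θ i) := fun θ i => by
    simpa only [c, inner_neg_right] using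
      isGreatest_abs_sub_image (hXc i) (hX i) (g := fun x => ⟪x, θ⟫) (by fun_prop) (y i)
  have hc_nonneg : ∀ θ i, 0 ≤ c θ i := fun θ i => by
    obtain ⟨x, -, hx⟩ := (hc θ i).1
    exact hx ▸ abs_nonneg _
  have hloss : ∀ θ i, sSup ((fun x => f (⟪x, θ⟫ - y i)) '' X i) = f (c θ i) := fun θ i =>
    sSup_image_comp_eq_of_isGreatest_abs hf_abs (fun a ha b _ hab => hf_mono a b ha hab) (hc θ i)
  apply csInf_eq_csInf_of_forall_exists_le
  · rintro _ ⟨θ, hθ, rfl⟩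
    refine ⟨_, ⟨θ, hθ, c θ, fun i => le_max_left _ _, fun i => le_max_right _ _, rfl⟩, ?_⟩
    simp only [hloss, le_refl]
  · rintro _ ⟨θ, hθ, z, hz₁, hz₂, rfl⟩
    refine ⟨_, ⟨θ, hθ, rfl⟩, Finset.sum_le_sum fun i _ => ?_⟩
    rw [hloss]
    exact hf_mono _ _ (hc_nonneg θ i) (max_le (hz₁ i) (hz₂ i))

/-- For nonempty `Θ ⊆ ℝ^d`, nonempty compact `X₁, …, Xₙ ⊆ ℝ^d`, `y ∈ ℝⁿ`, and
`f : ℝ → ℝ` with `f z = f |z|` and non-decreasing on `ℝ₊`, the optimal value of the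
robust ERM problem `minimize Σᵢ sup_{xᵢ ∈ Xᵢ} f (xᵢᵀθ - yᵢ)` over `θ ∈ Θ` equals the
optimal value of `minimize Σᵢ f (zᵢ)` over `θ ∈ Θ`, `z ∈ ℝⁿ` subject to
`S_{Xᵢ}(θ) - yᵢ ≤ zᵢ` and `S_{Xᵢ}(-θ) + yᵢ ≤ zᵢ`,
where `S_{Xᵢ}(θ) = sup_{x ∈ Xᵢ} xᵀθ`. -/
theorem rerm_reformulation_abs_nondecreasing {d n : ℕ}
    (Θ : Set (EuclideanSpace ℝ (Fin d))) (hΘ : Θ.Nonempty)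
    (X : Fin n → Set (EuclideanSpace ℝ (Fin d)))
    (hX : ∀ i, (X i).Nonempty) (hXc : ∀ i, IsCompact (X i))
    (y : Fin n → ℝ) (f : ℝ → ℝ)
    (hf_abs : ∀ z : ℝ, f z = f |z|)
    (hf_mono : ∀ a b : ℝ, 0 ≤ a → a ≤ b → f a ≤ f b) :
    sInf ((fun θ => ∑ i, sSup ((fun x => f (⟪x, θ⟫ - y i)) '' X i)) '' Θ)
      = sInf {v : ℝ | ∃ θ ∈ Θ, ∃ z : Fin n → ℝ,
          (∀ i, sSup ((fun x => ⟪x, θ⟫) '' X i) - y i ≤ z i) ∧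
          (∀ i, sSup ((fun x => ⟪x, -θ⟫) '' X i) + y i ≤ z i) ∧
          v = ∑ i, f (z i)} :=
  rerm_reformulation_abs_nondecreasing_general Θ X hX hXc y f hf_abs hf_mono
end
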